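/- arXiv:1902.02697 — 2 statements merged into one kernel-verified Lean document; each statement's English description precedes it below -/
import Mathlib

section
/- Setting y = 1 in the functional equation kernel: the quantity 1 − φ₃(x,1)/x evaluated appropriately yields the conservation-of-flow relation λ₁ + s₂l₂⁺(1 − Π(1,0)) = (s₁ + s̄₁s̄₂α₁ᾱ₂)(1 − Π(1,0) − Π(0,1) + Π(0,0)) + (s₁ + s̄₁α₁)(Π(1,0) − Π(0,0)), provided the functional equation Π(x,y)[xy − φ₃(x,y)] = [yφ₁(x,y) − φ₃(x,y)][Π(x,0) − Π(0,0)] + [xφ₂(x,y) − φ₃(x,y)][Π(0,y) − Π(0,0)] + [xyH(x,y) − φ₃(x,y)]Π(0,0) holds for all |x|,|y| ≤ 1, with Π a probability generating function (Π(1,1)=1) and the φ's, H as defined, H differentiable at (1,1) with ∂ₓH(1,1)=λ₁, ∂_yH(1,1)=λ₂. -/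
noncomputable def phi1 (H : ℝ → ℝ → ℝ) (s1 α1 lm1 lp1 : ℝ) (x y : ℝ) : ℝ :=
  H x y * ((1 - s1) * ((1 - α1) * x + α1) + s1 * (lm1 + lp1 * y))

noncomputable def phi2 (H : ℝ → ℝ → ℝ) (s2 α2 lm2 lp2 : ℝ) (x y : ℝ) : ℝ :=
  H x y * ((1 - s2) * ((1 - α2) * y + α2) + s2 * (lm2 + lp2 * x))

noncomputable def phi3 (H : ℝ → ℝ → ℝ) (s1 s2 α1 α2 lm1 lp1 lm2 lp2 : ℝ) (x y : ℝ) : ℝ :=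
  H x y * ((1 - s1) * (1 - s2) * (x * y * ((1 - α1) * (1 - α2) + α1 * α2)
      + α1 * (1 - α2) * y + (1 - α1) * α2 * x)
    + s1 * (1 - s2) * y * (lm1 + lp1 * y)
    + s2 * (1 - s1) * x * (lm2 + lp2 * x)
    + s1 * s2 * (lm1 * lm2 + lp1 * lm2 * y + lm1 * lp2 * x + lp1 * lp2 * x * y))

/-! At `y = 1` every coefficient of the functional equation vanishes at `x = 1`, because
`φ₁ = φ₂ = φ₃ = H = 1` at `(1, 1)`, so the equation restricted to `y = 1` is an identity in `x`
that reads `0 = 0` at `x = 1`. Differentiating it at `x = 1` (from the left, inside `[-1, 1]`)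
gives a linear relation between `λ₁`, `Π(1,0)`, `Π(0,1)` and `Π(0,0)`: the unknown derivatives
of `x ↦ Π(x,1)` and `x ↦ Π(x,0)` drop out since they multiply the vanishing coefficients. -/

theorem HasDerivWithinAt.eq_zero_of_eqOn_zero {𝕜 F : Type*} [NontriviallyNormedField 𝕜]
    [NormedAddCommGroup F] [NormedSpace 𝕜 F] {f : 𝕜 → F} {f' : F} {s : Set 𝕜} {x : 𝕜}
    (hf : HasDerivWithinAt f f' s x) (hs : UniqueDiffWithinAt 𝕜 s x) (hx : x ∈ s)
    (h : Set.EqOn f 0 s) : f' = 0 :=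
  hs.eq_deriv s hf ((hasDerivWithinAt_const x s 0).congr_of_mem h hx)

theorem HasDerivAt.mul_quadratic {h : ℝ → ℝ} {h' x₀ : ℝ} (hh : HasDerivAt h h' x₀) (a b c : ℝ) :
    HasDerivAt (fun x => h x * (a + b * x + c * x ^ 2))
      (h' * (a + b * x₀ + c * x₀ ^ 2) + h x₀ * (b + 2 * c * x₀)) x₀ := by
  have hq := (((hasDerivAt_id x₀).const_mul b).const_add a).add ((hasDerivAt_pow 2 x₀).const_mul c)
  exact (hh.mul hq).congr_deriv (by simp only [Pi.add_apply, id, Nat.cast_ofNat]; ring)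

section LeftSections

variable {H : ℝ → ℝ → ℝ} {lam s1 s2 α1 α2 lm1 lp1 lm2 lp2 : ℝ}

theorem phi1_one_one (hH : H 1 1 = 1) (hl1 : lm1 + lp1 = 1) :
    phi1 H s1 α1 lm1 lp1 1 1 = 1 := by
  simp only [phi1, hH]; linear_combination s1 * hl1

theorem phi2_one_one (hH : H 1 1 = 1) (hl2 : lm2 + lp2 = 1) :
    phi2 H s2 α2 lm2 lp2 1 1 = 1 := by
  simp only [phi2, hH]; linear_combination s2 * hl2

theorem phi3_one_one (hH : H 1 1 = 1) (hl1 : lm1 + lp1 = 1) (hl2 : lm2 + lp2 = 1) :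
    phi3 H s1 s2 α1 α2 lm1 lp1 lm2 lp2 1 1 = 1 := by
  obtain rfl : lm1 = 1 - lp1 := by linarith
  obtain rfl : lm2 = 1 - lp2 := by linarith
  simp only [phi3, hH]; ring

variable (hH : HasDerivAt (fun x => H x 1) lam 1) (hH11 : H 1 1 = 1)
include hH hH11

theorem hasDerivAt_phi1_left (hl1 : lm1 + lp1 = 1) :
    HasDerivAt (fun x => phi1 H s1 α1 lm1 lp1 x 1) (lam + 1 - (s1 + (1 - s1) * α1)) 1 := by
  refine ((hH.mul_quadratic ((1 - s1) * α1 + s1 * (lm1 + lp1)) ((1 - s1) * (1 - α1)) 0)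
    |>.congr_of_eventuallyEq (.of_forall fun x => ?_)).congr_deriv ?_
  · simp only [phi1]; ring
  · rw [hH11]; linear_combination (lam * s1) * hl1

theorem hasDerivAt_phi2_left (hl2 : lm2 + lp2 = 1) :
    HasDerivAt (fun x => phi2 H s2 α2 lm2 lp2 x 1) (lam + s2 * lp2) 1 := by
  refine ((hH.mul_quadratic ((1 - s2) + s2 * lm2) (s2 * lp2) 0)
    |>.congr_of_eventuallyEq (.of_forall fun x => ?_)).congr_deriv ?_
  · simp only [phi2]; ring
  · rw [hH11]; linear_combination (lam * s2) * hl2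

theorem hasDerivAt_phi3_left (hl1 : lm1 + lp1 = 1) (hl2 : lm2 + lp2 = 1) :
    HasDerivAt (fun x => phi3 H s1 s2 α1 α2 lm1 lp1 lm2 lp2 x 1)
      (lam + 1 + s2 * lp2 - (s1 + (1 - s1) * (1 - s2) * α1 * (1 - α2))) 1 := by
  obtain rfl : lm1 = 1 - lp1 := by linarith
  obtain rfl : lm2 = 1 - lp2 := by linarith
  refine ((hH.mul_quadratic
      ((1 - s1) * (1 - s2) * α1 * (1 - α2) + s1 * (1 - s2) + s1 * s2 * (1 - lp2))
      ((1 - s1) * (1 - s2) * ((1 - α1) * (1 - α2) + α1 * α2 + (1 - α1) * α2)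
        + s2 * (1 - s1) * (1 - lp2) + s1 * s2 * lp2)
      (s2 * (1 - s1) * lp2))
    |>.congr_of_eventuallyEq (.of_forall fun x => ?_)).congr_deriv ?_
  · simp only [phi3]; ring
  · rw [hH11]; ring

end LeftSections

theorem stmt6_general (s1 s2 α1 α2 lm1 lp1 lm2 lp2 lam1 : ℝ) (Pi H : ℝ → ℝ → ℝ)
    (hl1' : lm1 + lp1 = 1) (hl2' : lm2 + lp2 = 1)
    (hH11 : H 1 1 = 1) (hPi11 : Pi 1 1 = 1)
    (hFE : ∀ x y : ℝ, |x| ≤ 1 → |y| ≤ 1 →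
      Pi x y * (x * y - phi3 H s1 s2 α1 α2 lm1 lp1 lm2 lp2 x y)
        = (y * phi1 H s1 α1 lm1 lp1 x y - phi3 H s1 s2 α1 α2 lm1 lp1 lm2 lp2 x y)
            * (Pi x 0 - Pi 0 0)
          + (x * phi2 H s2 α2 lm2 lp2 x y - phi3 H s1 s2 α1 α2 lm1 lp1 lm2 lp2 x y)
            * (Pi 0 y - Pi 0 0)
          + (x * y * H x y - phi3 H s1 s2 α1 α2 lm1 lp1 lm2 lp2 x y) * Pi 0 0)
    (hd1 : ∃ p : ℝ, HasDerivAt (fun x => Pi x 1) p 1)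
    (hd0 : ∃ q : ℝ, HasDerivAt (fun x => Pi x 0) q 1)
    (hdH1 : HasDerivAt (fun x => H x 1) lam1 1) :
    lam1 + s2 * lp2 * (1 - Pi 1 0)
      = (s1 + (1 - s1) * (1 - s2) * α1 * (1 - α2)) * (1 - Pi 1 0 - Pi 0 1 + Pi 0 0)
        + (s1 + (1 - s1) * α1) * (Pi 1 0 - Pi 0 0) := by
  obtain ⟨p, hp⟩ := hd1
  obtain ⟨q, hq⟩ := hd0
  have hid := hasDerivAt_id (1 : ℝ)
  have h1 := hasDerivAt_phi1_left (s1 := s1) (α1 := α1) hdH1 hH11 hl1'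
  have h2 := hasDerivAt_phi2_left (s2 := s2) (α2 := α2) hdH1 hH11 hl2'
  have h3 := hasDerivAt_phi3_left (s1 := s1) (s2 := s2) (α1 := α1) (α2 := α2) hdH1 hH11 hl1' hl2'
  -- the derivative of (left side − right side) of the functional equation at `y = 1`
  have hF := (((hp.mul (hid.sub h3)).sub ((h1.sub h3).mul (hq.sub_const (Pi 0 0)))).sub
    (((hid.mul h2).sub h3).mul_const (Pi 0 1 - Pi 0 0))).sub
    (((hid.mul hdH1).sub h3).mul_const (Pi 0 0))
  have hzero := hF.hasDerivWithinAt.eq_zero_of_eqOn_zero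
    (uniqueDiffOn_Icc (by norm_num : (-1 : ℝ) < 1) 1 (by norm_num)) (by norm_num)
    fun x hx => by
      have := hFE x 1 (abs_le.2 hx) (by norm_num)
      simp only [_root_.Pi.mul_apply, _root_.Pi.sub_apply, _root_.Pi.zero_apply, id_eq, one_mul,
        mul_one] at this ⊢
      linear_combination this
  simp only [_root_.Pi.sub_apply, id, phi1_one_one hH11 hl1', phi2_one_one hH11 hl2',
    phi3_one_one hH11 hl1' hl2', hPi11, hH11] at hzero
  linear_combination -hzero

/-- Setting `y = 1` in the functional equation and differentiating at `x = 1`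
yields the first conservation-of-flow relation. -/
theorem stmt6 (s1 s2 α1 α2 lm1 lp1 lm2 lp2 lam1 lam2 : ℝ) (Pi H : ℝ → ℝ → ℝ)
    (hs1 : 0 ≤ s1) (hs1' : s1 ≤ 1) (hs2 : 0 ≤ s2) (hs2' : s2 ≤ 1)
    (hα1 : 0 ≤ α1) (hα1' : α1 ≤ 1) (hα2 : 0 ≤ α2) (hα2' : α2 ≤ 1)
    (hl1 : 0 ≤ lp1) (hl1' : lm1 + lp1 = 1) (hl2 : 0 ≤ lp2) (hl2' : lm2 + lp2 = 1)
    (hH11 : H 1 1 = 1) (hPi11 : Pi 1 1 = 1)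
    (hFE : ∀ x y : ℝ, |x| ≤ 1 → |y| ≤ 1 →
      Pi x y * (x * y - phi3 H s1 s2 α1 α2 lm1 lp1 lm2 lp2 x y)
        = (y * phi1 H s1 α1 lm1 lp1 x y - phi3 H s1 s2 α1 α2 lm1 lp1 lm2 lp2 x y)
            * (Pi x 0 - Pi 0 0)
          + (x * phi2 H s2 α2 lm2 lp2 x y - phi3 H s1 s2 α1 α2 lm1 lp1 lm2 lp2 x y)
            * (Pi 0 y - Pi 0 0)
          + (x * y * H x y - phi3 H s1 s2 α1 α2 lm1 lp1 lm2 lp2 x y) * Pi 0 0)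
    (hd1 : ∃ p : ℝ, HasDerivAt (fun x => Pi x 1) p 1)
    (hd0 : ∃ q : ℝ, HasDerivAt (fun x => Pi x 0) q 1)
    (hdH1 : HasDerivAt (fun x => H x 1) lam1 1)
    (hdH2 : HasDerivAt (fun y => H 1 y) lam2 1) :
    lam1 + s2 * lp2 * (1 - Pi 1 0)
      = (s1 + (1 - s1) * (1 - s2) * α1 * (1 - α2)) * (1 - Pi 1 0 - Pi 0 1 + Pi 0 0)
        + (s1 + (1 - s1) * α1) * (Pi 1 0 - Pi 0 0) :=
  stmt6_general s1 s2 α1 α2 lm1 lp1 lm2 lp2 lam1 Pi H hl1' hl2' hH11 hPi11 hFE hd1 hd0 hdH1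
end

section
/- Under the functional-equation consequences of the symmetric system, the mean queue length satisfies Π₁(1,1) = [λ(1−λ) + s·l⁺·(λ+s·l⁺)/(s+s̄²αᾱ) + Π₁(1,0)·(s̄²αᾱ − s̄α − s·l⁺)] / (s + s̄²αᾱ − λ − s·l⁺), given the conservation relation (3.3), the balance condition s·l⁺·(λ+s·l⁺)/(s+s̄²αᾱ) = s·s̄·l⁺·[1−Π(1,0)−Π(0,1)+Π(0,0)] + s·l⁺·[Π(1,0)−Π(0,0)], the symmetry Π(1,0)=Π(0,1), and the second-moment relation from differentiating the functional equation. -/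
/-!
Put `y = 1` in the functional equation: with `P = Π(·,1)`, `Q = Π(·,0)` and `h = H(·,1)` it
becomes `x P(x) = h(x) G(x)` on `[-1,1]`, where `G` is a combination of `P`, `Q` and constants
with quadratic coefficients. Differentiating twice at `x = 1` gives a linear relation between
`P'(1)`, `Q'(1)`, `Π(1,0)`, `Π(0,0)` and the unknown `P''(1)`, `Q''(1)`; the latter two drop out
because the coefficients of `P` and `Q` in `G` take the value `1` and `0` at `x = 1`. The
conservation relation and the balance condition then eliminate `Π(1,0)` and `Π(0,0)`.
-/

open Set

structure HasDerivTwiceAt (S : Set ℝ) (f f' : ℝ → ℝ) (f'' x₀ : ℝ) : Prop where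
  hasDerivAt : ∀ x ∈ S, HasDerivAt f (f' x) x
  hasDerivAt_deriv : HasDerivAt f' f'' x₀

theorem HasDerivWithinAt.eq_zero_of_eqOn_zero_s8 {f : ℝ → ℝ} {f' x : ℝ} {S : Set ℝ}
    (hf : HasDerivWithinAt f f' S x) (hS : UniqueDiffWithinAt ℝ S x) (hx : x ∈ S)
    (h0 : EqOn f 0 S) : f' = 0 :=
  hS.eq_deriv S hf ((hasDerivWithinAt_const x S 0).congr h0 (h0 hx))

namespace HasDerivTwiceAt

variable {S : Set ℝ} {f f' g g' : ℝ → ℝ} {f'' g'' x₀ : ℝ}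

theorem of_abs_le_one (hf : ∀ x, |x| ≤ 1 → HasDerivAt f (f' x) x) (hf' : HasDerivAt f' f'' x₀) :
    HasDerivTwiceAt (Icc (-1) 1) f f' f'' x₀ :=
  ⟨fun x hx => hf x (abs_le.2 hx), hf'⟩

theorem const (c : ℝ) : HasDerivTwiceAt S (fun _ => c) (fun _ => 0) 0 x₀ :=
  ⟨fun x _ => hasDerivAt_const x c, hasDerivAt_const x₀ 0⟩

theorem quadratic (a b c : ℝ) :
    HasDerivTwiceAt S (fun x => a + b * x + c * x ^ 2) (fun x => b + 2 * c * x) (2 * c) x₀ := by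
  refine ⟨fun x _ => ?_, ?_⟩
  · exact ((((hasDerivAt_id x).const_mul b).const_add a).add
      ((hasDerivAt_pow 2 x).const_mul c)).congr_deriv (by ring)
  · exact (((hasDerivAt_id x₀).const_mul (2 * c)).const_add b).congr_deriv (mul_one _)

theorem add (hf : HasDerivTwiceAt S f f' f'' x₀) (hg : HasDerivTwiceAt S g g' g'' x₀) :
    HasDerivTwiceAt S (fun x => f x + g x) (fun x => f' x + g' x) (f'' + g'') x₀ :=
  ⟨fun x hx => (hf.hasDerivAt x hx).add (hg.hasDerivAt x hx),
    hf.hasDerivAt_deriv.add hg.hasDerivAt_deriv⟩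

theorem sub (hf : HasDerivTwiceAt S f f' f'' x₀) (hg : HasDerivTwiceAt S g g' g'' x₀) :
    HasDerivTwiceAt S (fun x => f x - g x) (fun x => f' x - g' x) (f'' - g'') x₀ :=
  ⟨fun x hx => (hf.hasDerivAt x hx).sub (hg.hasDerivAt x hx),
    hf.hasDerivAt_deriv.sub hg.hasDerivAt_deriv⟩

theorem mul (hf : HasDerivTwiceAt S f f' f'' x₀) (hg : HasDerivTwiceAt S g g' g'' x₀)
    (hx₀ : x₀ ∈ S) :
    HasDerivTwiceAt S (fun x => f x * g x) (fun x => f' x * g x + f x * g' x)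
      (f'' * g x₀ + 2 * f' x₀ * g' x₀ + f x₀ * g'') x₀ := by
  refine ⟨fun x hx => (hf.hasDerivAt x hx).mul (hg.hasDerivAt x hx), ?_⟩
  have hf₀ := hf.hasDerivAt x₀ hx₀
  have hg₀ := hg.hasDerivAt x₀ hx₀
  exact ((hf.hasDerivAt_deriv.mul hg₀).add (hf₀.mul hg.hasDerivAt_deriv)).congr_deriv (by ring)

theorem eq_zero_of_eqOn_zero_s8 (hf : HasDerivTwiceAt S f f' f'' x₀) (hS : UniqueDiffOn ℝ S)
    (hx₀ : x₀ ∈ S) (h0 : EqOn f 0 S) : f'' = 0 := by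
  have h'0 : EqOn f' 0 S := fun x hx =>
    (hf.hasDerivAt x hx).hasDerivWithinAt.eq_zero_of_eqOn_zero_s8 (hS x hx) hx h0
  exact hf.hasDerivAt_deriv.hasDerivWithinAt.eq_zero_of_eqOn_zero_s8 (hS x₀ hx₀) hx₀ h'0

end HasDerivTwiceAt

theorem stmt8_general (s α lm lp lam : ℝ) (Pi H : ℝ → ℝ → ℝ) (dPi1 dPi0 dH : ℝ → ℝ)
    (hl : lp + lm = 1)
    (hstab : lam + s * lp < s + (1 - s) ^ 2 * α * (1 - α))
    (hH11 : H 1 1 = 1) (hPi11 : Pi 1 1 = 1)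
    (hFE : ∀ x y : ℝ, |x| ≤ 1 → |y| ≤ 1 →
      Pi x y * (x * y - phi3 H s s α α lm lp lm lp x y)
        = (y * phi1 H s α lm lp x y - phi3 H s s α α lm lp lm lp x y)
            * (Pi x 0 - Pi 0 0)
          + (x * phi2 H s α lm lp x y - phi3 H s s α α lm lp lm lp x y)
            * (Pi 0 y - Pi 0 0)
          + (x * y * H x y - phi3 H s s α α lm lp lm lp x y) * Pi 0 0)
    -- first and second order differentiability of the sections at hand
    (hd1 : ∀ x : ℝ, |x| ≤ 1 → HasDerivAt (fun t => Pi t 1) (dPi1 x) x)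
    (hd0 : ∀ x : ℝ, |x| ≤ 1 → HasDerivAt (fun t => Pi t 0) (dPi0 x) x)
    (hdH : ∀ x : ℝ, |x| ≤ 1 → HasDerivAt (fun t => H t 1) (dH x) x)
    (hdH1 : dH 1 = lam)
    (h2H : HasDerivAt dH 0 1)  -- Bernoulli arrivals: ∂²ₓH(1,1) = 0
    (h2P1 : ∃ L2 : ℝ, HasDerivAt dPi1 L2 1)
    (h2P0 : ∃ M2 : ℝ, HasDerivAt dPi0 M2 1)
    -- symmetry of the system
    (hsym : Pi 1 0 = Pi 0 1)
    -- conservation relation (s1)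
    (hcons : Pi 1 0 * ((1 - s) * α - 2 * (1 - s) ^ 2 * α * (1 - α) - s * lm)
        + Pi 0 0 * ((1 - s) ^ 2 * α * (1 - α) - (1 - s) * α)
        = lam + s * lp - (s + (1 - s) ^ 2 * α * (1 - α)))
    -- balance condition (s3)
    (hbal : s * lp * (lam + s * lp) / (s + (1 - s) ^ 2 * α * (1 - α))
        = s * (1 - s) * lp * (1 - Pi 1 0 - Pi 0 1 + Pi 0 0)
          + s * lp * (Pi 1 0 - Pi 0 0)) :
    dPi1 1 = (lam * (1 - lam)
        + s * lp * (lam + s * lp) / (s + (1 - s) ^ 2 * α * (1 - α))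
        + dPi0 1 * ((1 - s) ^ 2 * α * (1 - α) - (1 - s) * α - s * lp))
      / (s + (1 - s) ^ 2 * α * (1 - α) - lam - s * lp) := by
  obtain ⟨L2, hP2⟩ := h2P1
  obtain ⟨M2, hQ2⟩ := h2P0
  obtain rfl : lm = 1 - lp := by linarith
  have h1 : (1 : ℝ) ∈ Icc (-1) 1 := right_mem_Icc.2 (by norm_num)
  have jP := HasDerivTwiceAt.of_abs_le_one hd1 hP2
  have jQ := HasDerivTwiceAt.of_abs_le_one hd0 hQ2
  have jH := HasDerivTwiceAt.of_abs_le_one hdH h2H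
  have jX := HasDerivTwiceAt.quadratic (S := Icc (-1) 1) (x₀ := 1) 0 1 0
  have jA := HasDerivTwiceAt.quadratic (S := Icc (-1) 1) (x₀ := 1)
    ((1 - s) * α + s) ((1 - s) * (1 - α)) 0
  have jXB := HasDerivTwiceAt.quadratic (S := Icc (-1) 1) (x₀ := 1)
    0 ((1 - s) + s * (1 - lp)) (s * lp)
  have jC := HasDerivTwiceAt.quadratic (S := Icc (-1) 1) (x₀ := 1)
    ((1 - s) ^ 2 * α * (1 - α) + s * (1 - s) + s ^ 2 * (1 - lp))
    ((1 - s) ^ 2 * (1 - α * (1 - α)) + s * (1 - s) * (1 - lp) + s ^ 2 * lp) (s * (1 - s) * lp)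
  -- `G = c P + (a - c) (Q - Π(0,0)) + (x b - c) (Π(0,1) - Π(0,0)) + (x - c) Π(0,0)`, where
  -- `h a`, `h b`, `h c` are `φ₁`, `φ₂`, `φ₃` at `y = 1`
  have jG := (((jC.mul jP h1).add ((jA.sub jC).mul (jQ.sub (.const (Pi 0 0))) h1)).add
    ((jXB.sub jC).mul (.const (Pi 0 1 - Pi 0 0)) h1)).add ((jX.sub jC).mul (.const (Pi 0 0)) h1)
  have hF := ((jX.mul jP h1).sub (jH.mul jG h1)).eq_zero_of_eqOn_zero_s8
    (uniqueDiffOn_Icc (by norm_num)) h1 fun x hx => by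
      have h := hFE x 1 (abs_le.2 hx) (by norm_num)
      simp only [phi1, phi2, phi3] at h
      show _ = (0 : ℝ)
      linear_combination h
  simp only [hH11, hPi11, hdH1, hsym] at hF
  rw [hsym] at hbal hcons
  rw [eq_div_iff (by linarith), hbal]
  linear_combination (1 / 2 : ℝ) * hF - lam * hcons

/-- Symmetric system: the mean queue length `Π₁(1,1)` formula, obtained from the
functional equation together with the conservation relation, the balance condition
and the symmetry `Π(1,0) = Π(0,1)`. -/
theorem stmt8 (s α lm lp lam : ℝ) (Pi H : ℝ → ℝ → ℝ) (dPi1 dPi0 dH : ℝ → ℝ)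
    (hs0 : 0 < s) (hs1 : s < 1) (ha0 : 0 < α) (ha1 : α < 1)
    (hlp0 : 0 ≤ lp) (hl : lp + lm = 1) (hlam : 0 ≤ lam)
    (hstab : lam + s * lp < s + (1 - s) ^ 2 * α * (1 - α))
    (hH11 : H 1 1 = 1) (hPi11 : Pi 1 1 = 1)
    (hFE : ∀ x y : ℝ, |x| ≤ 1 → |y| ≤ 1 →
      Pi x y * (x * y - phi3 H s s α α lm lp lm lp x y)
        = (y * phi1 H s α lm lp x y - phi3 H s s α α lm lp lm lp x y)
            * (Pi x 0 - Pi 0 0)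
          + (x * phi2 H s α lm lp x y - phi3 H s s α α lm lp lm lp x y)
            * (Pi 0 y - Pi 0 0)
          + (x * y * H x y - phi3 H s s α α lm lp lm lp x y) * Pi 0 0)
    -- first and second order differentiability of the sections at hand
    (hd1 : ∀ x : ℝ, |x| ≤ 1 → HasDerivAt (fun t => Pi t 1) (dPi1 x) x)
    (hd0 : ∀ x : ℝ, |x| ≤ 1 → HasDerivAt (fun t => Pi t 0) (dPi0 x) x)
    (hdH : ∀ x : ℝ, |x| ≤ 1 → HasDerivAt (fun t => H t 1) (dH x) x)
    (hdH1 : dH 1 = lam)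
    (h2H : HasDerivAt dH 0 1)  -- Bernoulli arrivals: ∂²ₓH(1,1) = 0
    (h2P1 : ∃ L2 : ℝ, HasDerivAt dPi1 L2 1)
    (h2P0 : ∃ M2 : ℝ, HasDerivAt dPi0 M2 1)
    -- symmetry of the system
    (hsym : Pi 1 0 = Pi 0 1)
    -- conservation relation (s1)
    (hcons : Pi 1 0 * ((1 - s) * α - 2 * (1 - s) ^ 2 * α * (1 - α) - s * lm)
        + Pi 0 0 * ((1 - s) ^ 2 * α * (1 - α) - (1 - s) * α)
        = lam + s * lp - (s + (1 - s) ^ 2 * α * (1 - α)))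
    -- balance condition (s3)
    (hbal : s * lp * (lam + s * lp) / (s + (1 - s) ^ 2 * α * (1 - α))
        = s * (1 - s) * lp * (1 - Pi 1 0 - Pi 0 1 + Pi 0 0)
          + s * lp * (Pi 1 0 - Pi 0 0)) :
    dPi1 1 = (lam * (1 - lam)
        + s * lp * (lam + s * lp) / (s + (1 - s) ^ 2 * α * (1 - α))
        + dPi0 1 * ((1 - s) ^ 2 * α * (1 - α) - (1 - s) * α - s * lp))
      / (s + (1 - s) ^ 2 * α * (1 - α) - lam - s * lp) :=
  stmt8_general s α lm lp lam Pi H dPi1 dPi0 dH hl hstab hH11 hPi11 hFE hd1 hd0 hdH hdH1 h2H h2P1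
    h2P0 hsym hcons hbal
end
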